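/- Let H be an (n+1)×(n+1) real matrix with |H_{x,y}| ≤ C/(1 + (x-y)²) for all x, y, and let (b_y)_{y=0}^n satisfy ∑_{y=0}^{n-1} (b_{y+1} - b_y)² ≤ C'/(n+1). Then for every x, |∑_{y=0}^n H_{x,y} (b_y - b_x)| ≤ C''/√(n+1), where C'' depends only on C and C' (e.g. C'' = C·√(C')·∑_{m∈ℤ} |m|^{1/2}/(1+m²)). -/

import Mathlib

open Finset

noncomputable def kdbG (m : ℕ) : ℝ := Real.sqrt m / (1 + (m : ℝ) ^ 2)

lemma kdbG_nonneg (m : ℕ) : 0 ≤ kdbG m := by unfold kdbG; positivity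

lemma kdbG_le (m : ℕ) : kdbG m ≤ ((m : ℝ) ^ (3/2 : ℝ))⁻¹ := by
  rcases Nat.eq_zero_or_pos m with h | h
  · subst h; simp [kdbG]
  · have hm0 : (0:ℝ) < m := by exact_mod_cast h
    have h1 : kdbG m ≤ Real.sqrt m / (m : ℝ) ^ 2 := by
      unfold kdbG
      exact div_le_div_of_nonneg_left (Real.sqrt_nonneg _) (by positivity) (by nlinarith)
    refine h1.trans_eq ?_
    rw [Real.sqrt_eq_rpow, ← Real.rpow_natCast (m:ℝ) 2, ← Real.rpow_sub hm0,
      show (1:ℝ)/2 - ((2:ℕ):ℝ) = -(3/2) by norm_num, Real.rpow_neg hm0.le]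

noncomputable def kdbK : ℝ := ∑' m : ℕ, ((m : ℝ) ^ (3/2 : ℝ))⁻¹

lemma kdbK_nonneg : 0 ≤ kdbK := tsum_nonneg (fun m => by positivity)

lemma kdb_sum_g_le (N : ℕ) : ∑ m ∈ range N, kdbG m ≤ kdbK := by
  calc ∑ m ∈ range N, kdbG m ≤ ∑ m ∈ range N, ((m : ℝ) ^ (3/2 : ℝ))⁻¹ :=
        Finset.sum_le_sum fun m _ => kdbG_le m
    _ ≤ kdbK := Summable.sum_le_tsum _ (fun m _ => by positivity)
        (Real.summable_nat_rpow_inv.mpr (by norm_num))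

/-- Local-equilibrium estimate: a kernel with quadratic off-diagonal decay applied to a
sequence with discrete Dirichlet energy `O(1/(n+1))` produces deviations of order
`(n+1)^{-1/2}`, with a constant depending only on `C` and `C'`. -/
theorem kernel_deviation_bound (C C' : ℝ) (hC : 0 ≤ C) (hC' : 0 ≤ C') :
    ∃ C'' : ℝ,
      ∀ (n : ℕ) (H : Fin (n + 1) → Fin (n + 1) → ℝ) (b : Fin (n + 1) → ℝ),
        (∀ x y : Fin (n + 1), |H x y| ≤ C / (1 + ((x : ℝ) - (y : ℝ)) ^ 2)) →
        (∑ y : Fin n, (b y.succ - b y.castSucc) ^ 2 ≤ C' / (n + 1)) →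
        ∀ x : Fin (n + 1),
          |∑ y, H x y * (b y - b x)| ≤ C'' / Real.sqrt (n + 1) := by
  refine ⟨C * (2 * kdbK) * Real.sqrt C', ?_⟩
  intro n H b hH hE x
  set E : ℝ := ∑ y : Fin n, (b y.succ - b y.castSucc) ^ 2 with hEdef
  have hE0 : 0 ≤ E := Finset.sum_nonneg fun y _ => sq_nonneg _
  set B : ℕ → ℝ := fun k => b ⟨min k n, Nat.lt_succ_of_le (Nat.min_le_right k n)⟩ with hBdef
  have hBb : ∀ y : Fin (n + 1), B (y : ℕ) = b y := by
    intro y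
    simp only [hBdef]
    congr 1
    exact Fin.ext (by simp <;> omega)
  have hBgrad : ∑ k ∈ range n, (B (k + 1) - B k) ^ 2 = E := by
    rw [hEdef, ← Fin.sum_univ_eq_sum_range (fun k => (B (k + 1) - B k) ^ 2) n]
    refine Finset.sum_congr rfl fun y _ => ?_
    have hy : (y : ℕ) < n := y.isLt
    congr 2
    · simp only [hBdef]
      congr 1
      exact Fin.ext (by simp [Fin.val_succ] <;> omega)
    · simp only [hBdef]
      congr 1
      exact Fin.ext (by simp <;> omega)
  have key : ∀ i j : ℕ, i ≤ j → j ≤ n → (B j - B i) ^ 2 ≤ ((j - i : ℕ) : ℝ) * E := by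
    intro i j hij hjn
    have tel : B j - B i = ∑ k ∈ Finset.Ico i j, (B (k + 1) - B k) := by
      rw [Finset.sum_Ico_eq_sub _ hij, Finset.sum_range_sub, Finset.sum_range_sub]
      ring
    rw [tel]
    calc (∑ k ∈ Finset.Ico i j, (B (k + 1) - B k)) ^ 2
        ≤ (Finset.Ico i j).card * ∑ k ∈ Finset.Ico i j, (B (k + 1) - B k) ^ 2 :=
          sq_sum_le_card_mul_sum_sq
      _ ≤ ((j - i : ℕ) : ℝ) * E := by
          rw [Nat.card_Ico]
          refine mul_le_mul_of_nonneg_left ?_ (by positivity)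
          rw [← hBgrad]
          refine Finset.sum_le_sum_of_subset_of_nonneg ?_ (fun k _ _ => sq_nonneg _)
          intro k hk
          simp only [Finset.mem_Ico, Finset.mem_range] at *
          omega
  -- distance function
  set d : Fin (n + 1) → ℕ := fun y => max (x : ℕ) (y : ℕ) - min (x : ℕ) (y : ℕ) with hddef
  have hsq : ∀ y : Fin (n + 1), (b y - b x) ^ 2 ≤ ((d y : ℕ) : ℝ) * E := by
    intro y
    have hyn : (y : ℕ) ≤ n := by omega
    have hxn : (x : ℕ) ≤ n := by omega
    rcases le_total (x : ℕ) (y : ℕ) with h | h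
    · have := key (x : ℕ) (y : ℕ) h hyn
      rw [hBb, hBb] at this
      simpa [hddef, Nat.max_eq_right h, Nat.min_eq_left h] using this
    · have := key (y : ℕ) (x : ℕ) h hxn
      rw [hBb, hBb] at this
      have heq : (b y - b x) ^ 2 = (b x - b y) ^ 2 := by ring
      rw [heq]
      simpa [hddef, Nat.max_eq_left h, Nat.min_eq_right h] using this
  have habs : ∀ y : Fin (n + 1), |b y - b x| ≤ Real.sqrt (d y) * Real.sqrt E := by
    intro y
    calc |b y - b x| = Real.sqrt ((b y - b x) ^ 2) := (Real.sqrt_sq_eq_abs _).symm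
      _ ≤ Real.sqrt (((d y : ℕ) : ℝ) * E) := Real.sqrt_le_sqrt (hsq y)
      _ = Real.sqrt (d y) * Real.sqrt E := Real.sqrt_mul (Nat.cast_nonneg _) _
  have hdist : ∀ y : Fin (n + 1), ((x : ℝ) - (y : ℝ)) ^ 2 = ((d y : ℕ) : ℝ) ^ 2 := by
    intro y
    rcases le_total (x : ℕ) (y : ℕ) with h | h
    · rw [hddef]
      simp only [Nat.max_eq_right h, Nat.min_eq_left h]
      rw [Nat.cast_sub h]
      push_cast
      try ring
    · rw [hddef]
      simp only [Nat.max_eq_left h, Nat.min_eq_right h]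
      rw [Nat.cast_sub h]
  -- sum of kdbG over distances
  have hGsum : ∑ y : Fin (n + 1), kdbG (d y) ≤ 2 * kdbK := by
    have hxn : (x : ℕ) ≤ n := by omega
    rw [← Finset.sum_filter_add_sum_filter_not Finset.univ (fun y : Fin (n+1) => (y : ℕ) ≤ (x : ℕ))]
    have h1 : ∑ y ∈ Finset.univ.filter (fun y : Fin (n+1) => (y : ℕ) ≤ (x : ℕ)), kdbG (d y)
        ≤ kdbK := by
      have hre : ∀ y ∈ Finset.univ.filter (fun y : Fin (n+1) => (y : ℕ) ≤ (x : ℕ)),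
          kdbG (d y) = kdbG ((x : ℕ) - (y : ℕ)) := by
        intro y hy
        simp only [Finset.mem_filter] at hy
        congr 1
        rw [hddef]
        simp [Nat.max_eq_left hy.2, Nat.min_eq_right hy.2]
      have hinj : ∀ a ∈ Finset.univ.filter (fun y : Fin (n+1) => (y : ℕ) ≤ (x : ℕ)),
          ∀ c ∈ Finset.univ.filter (fun y : Fin (n+1) => (y : ℕ) ≤ (x : ℕ)),
          (x : ℕ) - (a : ℕ) = (x : ℕ) - (c : ℕ) → a = c := by
        intro a ha c hc hac
        simp only [Finset.mem_filter] at ha hc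
        exact Fin.ext (by omega)
      have hsub : (Finset.univ.filter (fun y : Fin (n+1) => (y : ℕ) ≤ (x : ℕ))).image
          (fun y : Fin (n+1) => (x : ℕ) - (y : ℕ)) ⊆ Finset.range (n + 1) := by
        intro m hm
        simp only [Finset.mem_image, Finset.mem_filter] at hm
        obtain ⟨y, hy, rfl⟩ := hm
        simp only [Finset.mem_range]
        omega
      calc ∑ y ∈ Finset.univ.filter (fun y : Fin (n+1) => (y : ℕ) ≤ (x : ℕ)), kdbG (d y)
          = ∑ y ∈ Finset.univ.filter (fun y : Fin (n+1) => (y : ℕ) ≤ (x : ℕ)),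
              kdbG ((x : ℕ) - (y : ℕ)) := Finset.sum_congr rfl hre
        _ = ∑ m ∈ (Finset.univ.filter (fun y : Fin (n+1) => (y : ℕ) ≤ (x : ℕ))).image
              (fun y : Fin (n+1) => (x : ℕ) - (y : ℕ)), kdbG m := (Finset.sum_image hinj).symm
        _ ≤ ∑ m ∈ Finset.range (n + 1), kdbG m :=
            Finset.sum_le_sum_of_subset_of_nonneg hsub (fun m _ _ => kdbG_nonneg m)
        _ ≤ kdbK := kdb_sum_g_le (n + 1)
    have h2 : ∑ y ∈ Finset.univ.filter (fun y : Fin (n+1) => ¬ (y : ℕ) ≤ (x : ℕ)), kdbG (d y)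
        ≤ kdbK := by
      have hre : ∀ y ∈ Finset.univ.filter (fun y : Fin (n+1) => ¬ (y : ℕ) ≤ (x : ℕ)),
          kdbG (d y) = kdbG ((y : ℕ) - (x : ℕ)) := by
        intro y hy
        simp only [Finset.mem_filter] at hy
        have hxy : (x : ℕ) ≤ (y : ℕ) := by omega
        congr 1
        rw [hddef]
        simp [Nat.max_eq_right hxy, Nat.min_eq_left hxy]
      have hinj : ∀ a ∈ Finset.univ.filter (fun y : Fin (n+1) => ¬ (y : ℕ) ≤ (x : ℕ)),
          ∀ c ∈ Finset.univ.filter (fun y : Fin (n+1) => ¬ (y : ℕ) ≤ (x : ℕ)),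
          (a : ℕ) - (x : ℕ) = (c : ℕ) - (x : ℕ) → a = c := by
        intro a ha c hc hac
        simp only [Finset.mem_filter] at ha hc
        exact Fin.ext (by omega)
      have hsub : (Finset.univ.filter (fun y : Fin (n+1) => ¬ (y : ℕ) ≤ (x : ℕ))).image
          (fun y : Fin (n+1) => (y : ℕ) - (x : ℕ)) ⊆ Finset.range (n + 1) := by
        intro m hm
        simp only [Finset.mem_image, Finset.mem_filter] at hm
        obtain ⟨y, hy, rfl⟩ := hm
        simp only [Finset.mem_range]
        omega
      calc ∑ y ∈ Finset.univ.filter (fun y : Fin (n+1) => ¬ (y : ℕ) ≤ (x : ℕ)), kdbG (d y)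
          = ∑ y ∈ Finset.univ.filter (fun y : Fin (n+1) => ¬ (y : ℕ) ≤ (x : ℕ)),
              kdbG ((y : ℕ) - (x : ℕ)) := Finset.sum_congr rfl hre
        _ = ∑ m ∈ (Finset.univ.filter (fun y : Fin (n+1) => ¬ (y : ℕ) ≤ (x : ℕ))).image
              (fun y : Fin (n+1) => (y : ℕ) - (x : ℕ)), kdbG m := (Finset.sum_image hinj).symm
        _ ≤ ∑ m ∈ Finset.range (n + 1), kdbG m :=
            Finset.sum_le_sum_of_subset_of_nonneg hsub (fun m _ _ => kdbG_nonneg m)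
        _ ≤ kdbK := kdb_sum_g_le (n + 1)
    linarith
  -- main chain
  have hsqE : Real.sqrt E ≤ Real.sqrt C' / Real.sqrt (n + 1) := by
    rw [← Real.sqrt_div hC']
    exact Real.sqrt_le_sqrt hE
  have step1 : |∑ y, H x y * (b y - b x)| ≤ ∑ y, C * Real.sqrt E * kdbG (d y) := by
    refine le_trans (Finset.abs_sum_le_sum_abs _ _) (Finset.sum_le_sum fun y _ => ?_)
    rw [abs_mul]
    have hterm : |H x y| * |b y - b x|
        ≤ (C / (1 + ((x : ℝ) - (y : ℝ)) ^ 2)) * (Real.sqrt (d y) * Real.sqrt E) := by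
      refine mul_le_mul (hH x y) (habs y) (abs_nonneg _) ?_
      positivity
    refine hterm.trans_eq ?_
    rw [hdist y]
    unfold kdbG
    field_simp
  have step2 : ∑ y, C * Real.sqrt E * kdbG (d y) ≤ C * Real.sqrt E * (2 * kdbK) := by
    rw [← Finset.mul_sum]
    exact mul_le_mul_of_nonneg_left hGsum (by positivity)
  have step3 : C * Real.sqrt E * (2 * kdbK)
      ≤ C * (2 * kdbK) * Real.sqrt C' / Real.sqrt (n + 1) := by
    have h2K : 0 ≤ 2 * kdbK := by linarith [kdbK_nonneg]
    calc C * Real.sqrt E * (2 * kdbK)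
        ≤ C * (Real.sqrt C' / Real.sqrt (n + 1)) * (2 * kdbK) := by
          refine mul_le_mul_of_nonneg_right (mul_le_mul_of_nonneg_left hsqE hC) h2K
      _ = C * (2 * kdbK) * Real.sqrt C' / Real.sqrt (n + 1) := by ring
  linarith [step1, step2, step3]
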